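/- Let (x̃_n)_{n∈ℕ} be a strictly increasing sequence with x̃_0 = 0 whose successive differences are bounded above (so that x̃_n grows at most linearly). On ℓ²(ℕ,ℂ) with orthonormal basis (e_n), let ã e_n = √(x̃_n) e_{n−1}, ã† e_n = √(x̃_{n+1}) e_{n+1}, Q̃ = (ã + ã†)/√2, P̃ = (ã − ã†)/(i√2), and for z ∈ ℂ let ṽ_z = Ñ(|z|²)^{−1/2} Σ_n (z^n/√(x̃_n!)) e_n, where x̃_n! = x̃_1⋯x̃_n and Ñ(t) = Σ_n t^n/x̃_n!. Then the variances of Q̃ and P̃ in the state ṽ_z are equal, and the product of dispersions satisfies Δ_{ṽ_z}Q̃ · Δ_{ṽ_z}P̃ = (1/2) Σ_{n=0}^∞ (x̃_{n+1} − x̃_n) |z|^{2n} / (Ñ(|z|²) x̃_n!) = (1/2) ⟨ṽ_z, (x̃_{N+1} − x̃_N) ṽ_z⟩, where ΔA := √(⟨ṽ_z, A² ṽ_z⟩ − ⟨ṽ_z, A ṽ_z⟩²) and x̃_N is the diagonal operator x̃_N e_n = x̃_n e_n. -/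

import Mathlib

noncomputable section

/-- The factorial `x̃ₙ! = x̃ 1 * ⋯ * x̃ n` (with `x̃₀! = 1`). -/
def tfact (xt : ℕ → ℝ) (n : ℕ) : ℝ := ∏ k ∈ Finset.range n, xt (k + 1)

/-- The exponential `Ñ(t) = Σ tⁿ/x̃ₙ!`. -/
def texp (xt : ℕ → ℝ) (t : ℝ) : ℝ := ∑' n : ℕ, t ^ n / tfact xt n

/-- Coefficients of the deformed coherent state
`ṽ_z = Ñ(|z|²)^{-1/2} Σ zⁿ/√(x̃ₙ!) eₙ` in the orthonormal basis `(eₙ)`. -/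
def tcoh (xt : ℕ → ℝ) (z : ℂ) (n : ℕ) : ℂ :=
  (Real.sqrt (texp xt (‖z‖ ^ 2)))⁻¹ * z ^ n / Real.sqrt (tfact xt n)

/-- The lowering operator `ã` acting on coefficient sequences:
`ã eₙ = √(x̃ₙ) e_{n−1}`, i.e. `(ã f)(n) = √(x̃_{n+1}) f(n+1)`. -/
def aOp (xt : ℕ → ℝ) (f : ℕ → ℂ) (n : ℕ) : ℂ := (Real.sqrt (xt (n + 1)) : ℂ) * f (n + 1)

/-- The raising operator `ã†` acting on coefficient sequences:
`ã† eₙ = √(x̃_{n+1}) e_{n+1}`, i.e. `(ã† f)(n) = √(x̃ₙ) f(n−1)` with `(ã† f)(0) = 0`. -/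
def adOp (xt : ℕ → ℝ) (f : ℕ → ℂ) (n : ℕ) : ℂ :=
  if n = 0 then 0 else (Real.sqrt (xt n) : ℂ) * f (n - 1)

/-- The position operator `Q̃ = (ã + ã†)/√2`. -/
def QOp (xt : ℕ → ℝ) (f : ℕ → ℂ) (n : ℕ) : ℂ :=
  (aOp xt f n + adOp xt f n) / (Real.sqrt 2 : ℂ)

/-- The momentum operator `P̃ = (ã − ã†)/(i√2)`. -/
def POp (xt : ℕ → ℝ) (f : ℕ → ℂ) (n : ℕ) : ℂ :=
  (aOp xt f n - adOp xt f n) / (Complex.I * (Real.sqrt 2 : ℂ))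

/-- The expectation value `⟨ṽ_z, T ṽ_z⟩ = Σ conj((ṽ_z)ₙ) (T ṽ_z)ₙ` of an
operator `T` (given by its action on coefficient sequences) in the state `ṽ_z`. -/
def expVal (xt : ℕ → ℝ) (z : ℂ) (T : (ℕ → ℂ) → ℕ → ℂ) : ℂ :=
  ∑' n : ℕ, (starRingEnd ℂ) (tcoh xt z n) * T (tcoh xt z) n

/-- The variance `⟨ṽ_z, T² ṽ_z⟩ − ⟨ṽ_z, T ṽ_z⟩²`. -/
def variance (xt : ℕ → ℝ) (z : ℂ) (T : (ℕ → ℂ) → ℕ → ℂ) : ℂ :=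
  expVal xt z (fun f => T (T f)) - (expVal xt z T) ^ 2

/-- The dispersion `Δ_{ṽ_z} T = √(⟨T²⟩ − ⟨T⟩²)` (the variance being real). -/
def disp (xt : ℕ → ℝ) (z : ℂ) (T : (ℕ → ℂ) → ℕ → ℂ) : ℝ :=
  Real.sqrt (variance xt z T).re

end

/-!
The coherent state `c = ṽ_z` is an eigenvector of `ã` with eigenvalue `z`, and `ã†` is the
adjoint of `ã`, so `⟨c, ã† f⟩ = z̄ ⟨c, f⟩`. For `T = α ã + β ã†` this gives `⟨T⟩ = α z + β z̄`
and `⟨T²⟩ = α² z² + α β ⟨ã ã†⟩ + β z̄ ⟨T⟩`, hence `Var T = α β (⟨ã ã†⟩ - |z|²)`.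
Now `⟨ã ã†⟩ = Σ x̃_{n+1} |cₙ|²` while `|z|² = ‖ã c‖² = Σ x̃ₙ |cₙ|²`, so
`Var T = α β Σ (x̃_{n+1} - x̃ₙ) |cₙ|²`; both `Q̃` and `P̃` have `α β = 1/2`.
Bounded gaps are what make `Σ x̃_{n+1} |cₙ|²` converge.
-/

open ComplexConjugate

section Ladder

variable {xt : ℕ → ℝ}

variable (xt) in
noncomputable def ladderComb (α β : ℂ) (f : ℕ → ℂ) (n : ℕ) : ℂ := α * aOp xt f n + β * adOp xt f n

lemma aOp_adOp (hx : ∀ n, 0 ≤ xt (n + 1)) (f : ℕ → ℂ) (n : ℕ) :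
    aOp xt (adOp xt f) n = xt (n + 1) * f n := by
  simp only [aOp, adOp, Nat.add_one_ne_zero, if_false, Nat.add_sub_cancel, ← mul_assoc,
    ← Complex.ofReal_mul, Real.mul_self_sqrt (hx n)]

lemma aOp_ladderComb (α β : ℂ) (f : ℕ → ℂ) (n : ℕ) :
    aOp xt (ladderComb xt α β f) n = α * aOp xt (aOp xt f) n + β * aOp xt (adOp xt f) n := by
  simp only [aOp, ladderComb]
  ring

lemma hasSum_conj_mul_adOp_iff (c f : ℕ → ℂ) (a : ℂ) :
    HasSum (fun n => conj (c n) * adOp xt f n) a ↔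
      HasSum (fun n => conj (aOp xt c n) * f n) a := by
  rw [← hasSum_nat_add_iff' 1]
  simp only [Finset.range_one, Finset.sum_singleton, adOp, aOp, if_true, mul_zero, sub_zero,
    Nat.add_one_ne_zero, if_false, Nat.add_sub_cancel, map_mul, Complex.conj_ofReal]
  exact Iff.of_eq (congrArg (HasSum · a) (funext fun n => by ring))

end Ladder

section Eigenvector

variable {xt : ℕ → ℝ} {c : ℕ → ℂ} {z : ℂ}

lemma aOp_aOp_of_eigen (hc : aOp xt c = fun n => z * c n) (n : ℕ) :
    aOp xt (aOp xt c) n = z ^ 2 * c n := by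
  have h := congrFun hc n
  rw [hc]
  simp only [aOp] at h ⊢
  linear_combination z * h

lemma HasSum.conj_mul_adOp (hc : aOp xt c = fun n => z * c n) {f : ℕ → ℂ} {a : ℂ}
    (h : HasSum (fun n => conj (c n) * f n) a) :
    HasSum (fun n => conj (c n) * adOp xt f n) (conj z * a) := by
  rw [hasSum_conj_mul_adOp_iff, hc]
  simpa only [map_mul, mul_assoc] using h.mul_left (conj z)

lemma succ_mul_norm_sq_succ (hx : ∀ n, 0 ≤ xt (n + 1)) (hc : aOp xt c = fun n => z * c n)
    (n : ℕ) : xt (n + 1) * ‖c (n + 1)‖ ^ 2 = ‖z‖ ^ 2 * ‖c n‖ ^ 2 := by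
  have h := congrArg (fun f => ‖f n‖ ^ 2) hc
  simp only [aOp, norm_mul, Complex.norm_real, Real.norm_of_nonneg (Real.sqrt_nonneg _),
    mul_pow, Real.sq_sqrt (hx n)] at h
  exact h

lemma hasSum_mul_norm_sq (hx0 : xt 0 = 0) (hx : ∀ n, 0 ≤ xt (n + 1))
    (hc : aOp xt c = fun n => z * c n) {S : ℝ} (h : HasSum (fun n => ‖c n‖ ^ 2) S) :
    HasSum (fun n => xt n * ‖c n‖ ^ 2) (‖z‖ ^ 2 * S) := by
  rw [← hasSum_nat_add_iff' 1]
  simpa only [Finset.range_one, Finset.sum_singleton, hx0, zero_mul, sub_zero,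
    succ_mul_norm_sq_succ hx hc] using h.mul_left (‖z‖ ^ 2)

lemma summable_succ_mul_norm_sq (hx0 : xt 0 = 0) (hx : ∀ n, 0 ≤ xt (n + 1)) {L : ℝ}
    (hL : ∀ n, xt (n + 1) - xt n ≤ L) (hc : aOp xt c = fun n => z * c n)
    (h : Summable (fun n => ‖c n‖ ^ 2)) :
    Summable (fun n => xt (n + 1) * ‖c n‖ ^ 2) := by
  refine Summable.of_nonneg_of_le (fun n => by have := hx n; positivity) (fun n => ?_)
    ((hasSum_mul_norm_sq hx0 hx hc h.hasSum).summable.add (h.mul_left L))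
  rw [← add_mul]
  exact mul_le_mul_of_nonneg_right (by linarith [hL n]) (sq_nonneg _)

theorem variance_ladderComb (hx0 : xt 0 = 0) (hx : ∀ n, 0 ≤ xt (n + 1))
    (hc : aOp xt c = fun n => z * c n) (hnorm : HasSum (fun n => ‖c n‖ ^ 2) 1)
    (hC : Summable (fun n => xt (n + 1) * ‖c n‖ ^ 2)) (α β : ℂ) :
    ∑' n, conj (c n) * ladderComb xt α β (ladderComb xt α β c) n
        - (∑' n, conj (c n) * ladderComb xt α β c n) ^ 2 =
      α * β * ((∑' n, (xt (n + 1) - xt n) * ‖c n‖ ^ 2 : ℝ) : ℂ) := by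
  set C := ∑' n, xt (n + 1) * ‖c n‖ ^ 2
  have hS : HasSum (fun n => conj (c n) * c n) 1 := by
    simpa only [Complex.conj_mul', Complex.ofReal_pow, Complex.ofReal_one] using
      Complex.hasSum_ofReal.mpr hnorm
  have hSC : HasSum (fun n => conj (c n) * aOp xt (adOp xt c) n) (C : ℂ) := by
    refine (Complex.hasSum_ofReal.mpr hC.hasSum).congr_fun fun n => ?_
    rw [aOp_adOp hx, mul_left_comm, Complex.conj_mul']
    push_cast
    ring
  have hE1 : HasSum (fun n => conj (c n) * ladderComb xt α β c n) (α * z + β * conj z) := by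
    rw [show α * z + β * conj z = α * z * 1 + β * (conj z * 1) by ring]
    refine ((hS.mul_left (α * z)).add ((hS.conj_mul_adOp hc).mul_left β)).congr_fun fun n => ?_
    simp only [ladderComb, hc]
    ring
  have hE2 : HasSum (fun n => conj (c n) * ladderComb xt α β (ladderComb xt α β c) n)
      (α * (α * z ^ 2 + β * C) + β * (conj z * (α * z + β * conj z))) := by
    rw [show α * (α * z ^ 2 + β * C) = α * α * z ^ 2 * 1 + α * β * C by ring]
    refine (((hS.mul_left (α * α * z ^ 2)).add (hSC.mul_left (α * β))).add
      ((hE1.conj_mul_adOp hc).mul_left β)).congr_fun fun n => ?_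
    simp only [ladderComb, aOp_ladderComb, aOp_aOp_of_eigen hc]
    ring
  have hgap : HasSum (fun n => (xt (n + 1) - xt n) * ‖c n‖ ^ 2) (C - ‖z‖ ^ 2) := by
    simpa only [sub_mul, mul_one] using hC.hasSum.sub (hasSum_mul_norm_sq hx0 hx hc hnorm)
  rw [hE1.tsum_eq, hE2.tsum_eq, hgap.tsum_eq]
  push_cast
  linear_combination -(α * β) * Complex.mul_conj' z

end Eigenvector

section CoherentState

variable {xt : ℕ → ℝ} {z : ℂ}

lemma tfact_pos (hpos : ∀ n, 0 < xt (n + 1)) (n : ℕ) : 0 < tfact xt n :=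
  Finset.prod_pos fun k _ => hpos k

lemma tfact_succ (n : ℕ) : tfact xt (n + 1) = tfact xt n * xt (n + 1) :=
  Finset.prod_range_succ _ _

lemma texp_nonneg (hpos : ∀ n, 0 < xt (n + 1)) {t : ℝ} (ht : 0 ≤ t) : 0 ≤ texp xt t :=
  tsum_nonneg fun n => div_nonneg (pow_nonneg ht n) (tfact_pos hpos n).le

lemma aOp_tcoh (hpos : ∀ n, 0 < xt (n + 1)) : aOp xt (tcoh xt z) = fun n => z * tcoh xt z n := by
  ext n
  have hfact : Real.sqrt (tfact xt (n + 1)) = Real.sqrt (tfact xt n) * Real.sqrt (xt (n + 1)) := by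
    rw [tfact_succ, Real.sqrt_mul (tfact_pos hpos n).le]
  have hsqrt : (Real.sqrt (xt (n + 1)) : ℂ) ≠ 0 :=
    Complex.ofReal_ne_zero.mpr (Real.sqrt_pos.mpr (hpos n)).ne'
  simp only [aOp, tcoh, hfact, Complex.ofReal_mul]
  field_simp
  ring

lemma norm_tcoh_sq (hpos : ∀ n, 0 < xt (n + 1)) (n : ℕ) :
    ‖tcoh xt z n‖ ^ 2 = ‖z‖ ^ (2 * n) / (texp xt (‖z‖ ^ 2) * tfact xt n) := by
  simp only [tcoh, norm_div, norm_mul, norm_inv, norm_pow, Complex.norm_real,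
    Real.norm_of_nonneg (Real.sqrt_nonneg _), div_pow, mul_pow, inv_pow,
    Real.sq_sqrt (texp_nonneg hpos (sq_nonneg ‖z‖)), Real.sq_sqrt (tfact_pos hpos n).le]
  ring

lemma hasSum_norm_tcoh_sq (hpos : ∀ n, 0 < xt (n + 1))
    (h : Summable fun n => (‖z‖ ^ 2) ^ n / tfact xt n) :
    HasSum (fun n => ‖tcoh xt z n‖ ^ 2) 1 := by
  have hN : 1 ≤ texp xt (‖z‖ ^ 2) := by
    have : (‖z‖ ^ 2) ^ 0 / tfact xt 0 ≤ texp xt (‖z‖ ^ 2) :=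
      h.le_tsum 0 fun n _ => div_nonneg (by positivity) (tfact_pos hpos n).le
    simpa [tfact] using this
  have : HasSum _ (texp xt (‖z‖ ^ 2) / texp xt (‖z‖ ^ 2)) := h.hasSum.div_const _
  rw [div_self (by positivity)] at this
  refine this.congr_fun fun n => ?_
  rw [norm_tcoh_sq hpos, pow_mul, mul_comm, div_div]

-- `texp` takes the junk value `0` on a divergent series.
lemma tcoh_eq_zero (h : ¬Summable fun n => (‖z‖ ^ 2) ^ n / tfact xt n) : tcoh xt z = 0 := by
  ext n
  simp [tcoh, texp, tsum_eq_zero_of_not_summable h]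

theorem variance_ladderComb_tcoh (hx0 : xt 0 = 0) (hpos : ∀ n, 0 < xt (n + 1)) {L : ℝ}
    (hL : ∀ n, xt (n + 1) - xt n ≤ L) (α β : ℂ) :
    variance xt z (ladderComb xt α β) =
      α * β * ((∑' n, (xt (n + 1) - xt n) * ‖tcoh xt z n‖ ^ 2 : ℝ) : ℂ) := by
  have hx n : 0 ≤ xt (n + 1) := (hpos n).le
  by_cases h : Summable fun n => (‖z‖ ^ 2) ^ n / tfact xt n
  · have hnorm := hasSum_norm_tcoh_sq hpos h
    exact variance_ladderComb hx0 hx (aOp_tcoh hpos) hnorm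
      (summable_succ_mul_norm_sq hx0 hx hL (aOp_tcoh hpos) hnorm.summable) α β
  · simp [variance, expVal, tcoh_eq_zero h]

lemma expVal_diagonal (d : ℕ → ℝ) :
    expVal xt z (fun f n => (d n : ℂ) * f n) = ((∑' n, d n * ‖tcoh xt z n‖ ^ 2 : ℝ) : ℂ) := by
  simp only [expVal, Complex.ofReal_tsum, mul_left_comm _ (d _ : ℂ), Complex.conj_mul']
  push_cast
  rfl

end CoherentState

lemma QOp_eq_ladderComb (xt : ℕ → ℝ) :
    QOp xt = ladderComb xt (Real.sqrt 2 : ℂ)⁻¹ (Real.sqrt 2 : ℂ)⁻¹ := by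
  ext f n
  simp only [QOp, ladderComb]
  ring

lemma POp_eq_ladderComb (xt : ℕ → ℝ) :
    POp xt = ladderComb xt (Complex.I * Real.sqrt 2)⁻¹ (-(Complex.I * Real.sqrt 2)⁻¹) := by
  ext f n
  simp only [POp, ladderComb]
  ring

lemma ofReal_sqrt_two_sq : ((Real.sqrt 2 : ℝ) : ℂ) ^ 2 = 2 := by
  rw [← Complex.ofReal_pow, Real.sq_sqrt zero_le_two, Complex.ofReal_ofNat]

/-- for a strictly increasing sequence `x̃` with `x̃₀ = 0` and
bounded gaps, in the deformed coherent state `ṽ_z` the variances of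
`Q̃ = (ã + ã†)/√2` and `P̃ = (ã − ã†)/(i√2)` are equal, and the product of
dispersions satisfies
`Δ_{ṽ_z}Q̃ · Δ_{ṽ_z}P̃ = (1/2) Σₙ (x̃_{n+1} − x̃ₙ) |z|^{2n}/(Ñ(|z|²) x̃ₙ!)
 = (1/2)⟨ṽ_z, (x̃_{N+1} − x̃_N) ṽ_z⟩`. -/
theorem stmt_8 (xt : ℕ → ℝ) (hx0 : xt 0 = 0) (hmono : StrictMono xt)
    (L : ℝ) (hL : ∀ n, xt (n + 1) - xt n ≤ L) (z : ℂ) :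
    variance xt z (QOp xt) = variance xt z (POp xt) ∧
    disp xt z (QOp xt) * disp xt z (POp xt) =
      (1 / 2) * ∑' n : ℕ, (xt (n + 1) - xt n) * ‖z‖ ^ (2 * n) /
        (texp xt (‖z‖ ^ 2) * tfact xt n) ∧
    disp xt z (QOp xt) * disp xt z (POp xt) =
      ((1 / 2 : ℂ) * expVal xt z
        (fun f n => ((xt (n + 1) - xt n : ℝ) : ℂ) * f n)).re := by
  have hpos n : 0 < xt (n + 1) := hx0 ▸ hmono n.succ_pos
  set V := (1 / 2 : ℝ) * ∑' n, (xt (n + 1) - xt n) * ‖tcoh xt z n‖ ^ 2 with hV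
  have hQ : variance xt z (QOp xt) = V := by
    rw [QOp_eq_ladderComb, variance_ladderComb_tcoh hx0 hpos hL, hV, Complex.ofReal_mul]
    congr 1
    push_cast
    field_simp
    linear_combination (-1 : ℂ) * ofReal_sqrt_two_sq
  have hP : variance xt z (POp xt) = V := by
    rw [POp_eq_ladderComb, variance_ladderComb_tcoh hx0 hpos hL, hV, Complex.ofReal_mul]
    congr 1
    push_cast
    field_simp
    linear_combination ofReal_sqrt_two_sq - (Real.sqrt 2 : ℂ) ^ 2 * Complex.I_sq
  have hV0 : 0 ≤ V :=
    mul_nonneg one_half_pos.le <| tsum_nonneg fun n =>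
      mul_nonneg (sub_nonneg.mpr (hmono n.lt_succ_self).le) (sq_nonneg _)
  have hdisp : disp xt z (QOp xt) * disp xt z (POp xt) = V := by
    rw [disp, disp, hQ, hP, Complex.ofReal_re, Real.mul_self_sqrt hV0]
  refine ⟨hQ.trans hP.symm, ?_, ?_⟩
  · simp only [hdisp, hV, norm_tcoh_sq hpos, mul_div_assoc]
  · rw [hdisp, expVal_diagonal, ← Complex.ofReal_ofNat, ← Complex.ofReal_one,
      ← Complex.ofReal_div, ← Complex.ofReal_mul, Complex.ofReal_re]
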